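/- arXiv:0704.1914 — 4 statements merged into one kernel-verified Lean document; each statement's English description precedes it below -/
import Mathlib

section
/- For every finite group Σ, the number of group homomorphisms from K_3 into Σ equals |Σ|², i.e. Nat.card (K_3 →* Σ) = (Nat.card Σ)². -/
def braidRels (n : ℕ) : Set (FreeGroup (Fin (n - 1))) :=
  {r | (∃ i j : Fin (n - 1), 2 ≤ |(i : ℤ) - (j : ℤ)| ∧
        r = FreeGroup.of i * FreeGroup.of j * (FreeGroup.of i)⁻¹ * (FreeGroup.of j)⁻¹) ∨
       (∃ i j : Fin (n - 1), |(i : ℤ) - (j : ℤ)| = 1 ∧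
        r = FreeGroup.of i * FreeGroup.of j * FreeGroup.of i *
            (FreeGroup.of j)⁻¹ * (FreeGroup.of i)⁻¹ * (FreeGroup.of j)⁻¹)}

/-- The braid group `B n` on `n` strands, presented with generators `σ_1, …, σ_{n-1}`. -/
abbrev BraidGroup (n : ℕ) : Type := PresentedGroup (braidRels n)

/-- The generator `σ_{i+1}` of the braid group. -/
def braidGen {n : ℕ} (i : Fin (n - 1)) : BraidGroup n := PresentedGroup.of i

/-!
Put `a = σ₂σ₁⁻¹` and `b = σ₁σ₂σ₁⁻²` in `B₃`. Conjugation by `σ₁` maps `a ↦ b` and `b ↦ a⁻¹b`,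
and `σ₁ ↦ τ`, `σ₂ ↦ aτ` identifies `B₃` with the semidirect product `F(a, b) ⋊ ⟨τ⟩`, where `τ`
acts on the free group `F(a, b)` by this automorphism. The quotient `⟨τ⟩ ≅ ℤ` is abelian, so the
commutator subgroup lies in `F(a, b)`; conversely `⁅τ, b⁆ = a⁻¹` and `⁅τ, a⁆ = ba⁻¹`. Hence `K₃`
is free on `a, b`, and a homomorphism `K₃ → Σ` is an arbitrary choice of two elements of `Σ`.
-/

theorem FreeGroup.card_monoidHom {α G : Type*} [Finite α] [Group G] :
    Nat.card (FreeGroup α →* G) = Nat.card G ^ Nat.card α := by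
  rw [← Nat.card_fun, Nat.card_congr FreeGroup.lift.symm]

theorem Subgroup.map_commutator_of_surjective {G H : Type*} [Group G] [Group H] {f : G →* H}
    (hf : Function.Surjective f) : (_root_.commutator G).map f = _root_.commutator H := by
  rw [map_commutator_eq, f.range_eq_top.mpr hf, _root_.commutator_def]

theorem Function.Semiconj.mulAut_zpow {M N : Type*} [Mul M] [Mul N] {f : M → N} {e : MulAut M}
    {c : MulAut N} (h : Function.Semiconj f e c) (k : ℤ) :
    Function.Semiconj f ⇑(e ^ k) ⇑(c ^ k) := by
  induction k using Int.induction_on with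
  | zero => exact Function.Semiconj.id_right
  | succ k ih => rw [zpow_add_one, zpow_add_one]; exact ih.comp_right h
  | pred k ih =>
    rw [zpow_sub_one, zpow_sub_one]
    exact ih.comp_right (h.inverses_right e.apply_symm_apply c.symm_apply_apply)

namespace SemidirectProduct

variable {N G : Type*} [Group N]

open scoped commutatorElement in
theorem commutatorElement_inr_inl [Group G] {φ : G →* MulAut N} (g : G) (n : N) :
    ⁅(inr g : N ⋊[φ] G), inl n⁆ = (inl (φ g n * n⁻¹) : N ⋊[φ] G) := by
  rw [commutatorElement_def, _root_.map_mul, _root_.map_inv, inl_aut, _root_.map_inv]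

theorem commutator_le_range_inl [CommGroup G] {φ : G →* MulAut N} :
    commutator (N ⋊[φ] G) ≤ (inl : N →* N ⋊[φ] G).range := by
  rw [range_inl_eq_ker_rightHom]
  exact Abelianization.commutator_subset_ker rightHom

end SemidirectProduct

namespace BraidGroup

section Lift

variable {H : Type*} [Group H]

theorem braidGen_braid_rel :
    (braidGen 0 : BraidGroup 3) * braidGen 1 * braidGen 0 = braidGen 1 * braidGen 0 * braidGen 1 :=
  PresentedGroup.mk_eq_mk_of_mul_inv_mem (Or.inr ⟨0, 1, by decide, by group⟩)

theorem lift_braidRels_three {a b : H} (h : a * b * a = b * a * b) :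
    ∀ r ∈ braidRels 3, FreeGroup.lift ![a, b] r = 1 := by
  have braid_relator {x y : H} (hxy : x * y * x = y * x * y) :
      x * y * x * y⁻¹ * x⁻¹ * y⁻¹ = 1 := by
    rw [hxy]; group
  rintro r (⟨i, j, hij, rfl⟩ | ⟨i, j, hij, rfl⟩) <;> fin_cases i <;> fin_cases j <;>
    simp at hij
  · simpa using braid_relator h
  · simpa using braid_relator h.symm

def liftThree {a b : H} (h : a * b * a = b * a * b) : BraidGroup 3 →* H :=
  PresentedGroup.toGroup (lift_braidRels_three h)

@[simp]
theorem liftThree_braidGen_zero {a b : H} (h : a * b * a = b * a * b) :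
    liftThree h (braidGen 0) = a :=
  PresentedGroup.toGroup.of _

@[simp]
theorem liftThree_braidGen_one {a b : H} (h : a * b * a = b * a * b) :
    liftThree h (braidGen 1) = b :=
  PresentedGroup.toGroup.of _

theorem hom_ext_three {f g : BraidGroup 3 →* H} (h₀ : f (braidGen 0) = g (braidGen 0))
    (h₁ : f (braidGen 1) = g (braidGen 1)) : f = g :=
  PresentedGroup.ext fun i => by fin_cases i; exacts [h₀, h₁]

end Lift

open FreeGroup SemidirectProduct Multiplicative

def freeAut : MulAut (FreeGroup (Fin 2)) :=
  MonoidHom.toMulEquiv (FreeGroup.lift ![of 1, (of 0)⁻¹ * of 1])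
    (FreeGroup.lift ![of 0 * (of 1)⁻¹, of 0])
    (by ext i; fin_cases i <;> simp) (by ext i; fin_cases i <;> simp)

@[simp] theorem freeAut_of_zero : freeAut (of 0) = of 1 := by simp [freeAut]

@[simp] theorem freeAut_of_one : freeAut (of 1) = (of 0)⁻¹ * of 1 := by simp [freeAut]

abbrev FreeByCyclic := FreeGroup (Fin 2) ⋊[zpowersHom _ freeAut] Multiplicative ℤ

local notation "τ" => (inr (ofAdd 1) : FreeByCyclic)
local notation "σ₁" => (braidGen 0 : BraidGroup 3)
local notation "σ₂" => (braidGen 1 : BraidGroup 3)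

theorem inl_freeAut (x : FreeGroup (Fin 2)) :
    (inl (freeAut x) : FreeByCyclic) = τ * inl x * τ⁻¹ := by
  simpa using inl_aut (φ := zpowersHom _ freeAut) (ofAdd 1) x

theorem braid_rel_freeByCyclic :
    τ * (inl (of 0) * τ) * τ = inl (of 0) * τ * τ * (inl (of 0) * τ) := by
  ext <;> simp [sq, MulAut.mul_apply]

def toFreeByCyclic : BraidGroup 3 →* FreeByCyclic := liftThree braid_rel_freeByCyclic

@[simp] theorem toFreeByCyclic_braidGen_zero : toFreeByCyclic σ₁ = τ := liftThree_braidGen_zero _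

@[simp] theorem toFreeByCyclic_braidGen_one : toFreeByCyclic σ₂ = inl (of 0) * τ :=
  liftThree_braidGen_one _

def freeToBraid : FreeGroup (Fin 2) →* BraidGroup 3 :=
  FreeGroup.lift ![σ₂ * σ₁⁻¹, σ₁ * σ₂ * σ₁⁻¹ * σ₁⁻¹]

@[simp] theorem freeToBraid_of_zero : freeToBraid (of 0) = σ₂ * σ₁⁻¹ := by simp [freeToBraid]

@[simp] theorem freeToBraid_of_one : freeToBraid (of 1) = σ₁ * σ₂ * σ₁⁻¹ * σ₁⁻¹ := by
  simp [freeToBraid]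

theorem semiconj_freeToBraid : Function.Semiconj freeToBraid freeAut (MulAut.conj σ₁) := by
  suffices freeToBraid.comp freeAut.toMonoidHom = (MulAut.conj σ₁).toMonoidHom.comp freeToBraid
    from DFunLike.congr_fun this
  refine FreeGroup.ext_hom _ _ fun i => ?_
  fin_cases i
  · show freeToBraid (freeAut (of 0)) = σ₁ * freeToBraid (of 0) * σ₁⁻¹
    rw [freeAut_of_zero, freeToBraid_of_zero, freeToBraid_of_one]
    group
  · show freeToBraid (freeAut (of 1)) = σ₁ * freeToBraid (of 1) * σ₁⁻¹
    rw [freeAut_of_one, _root_.map_mul, _root_.map_inv, freeToBraid_of_zero, freeToBraid_of_one]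
    calc _ = σ₁ * σ₂⁻¹ * (σ₁ * σ₂ * σ₁) * σ₁⁻¹ ^ 3 := by group
      _ = σ₁ * σ₂⁻¹ * (σ₂ * σ₁ * σ₂) * σ₁⁻¹ ^ 3 := by rw [braidGen_braid_rel]
      _ = _ := by group

def ofFreeByCyclic : FreeByCyclic →* BraidGroup 3 :=
  SemidirectProduct.lift freeToBraid (zpowersHom _ σ₁) fun g => by
    refine MonoidHom.ext fun x => ?_
    simpa [map_zpow] using semiconj_freeToBraid.mulAut_zpow g.toAdd x

@[simp] theorem ofFreeByCyclic_inl (x : FreeGroup (Fin 2)) :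
    ofFreeByCyclic (inl x) = freeToBraid x :=
  lift_inl _ _ _ x

@[simp] theorem ofFreeByCyclic_inr_ofAdd_one : ofFreeByCyclic τ = σ₁ := by
  simp [ofFreeByCyclic]

theorem ofFreeByCyclic_comp_toFreeByCyclic :
    ofFreeByCyclic.comp toFreeByCyclic = MonoidHom.id _ :=
  hom_ext_three (by simp) (by simp)

theorem toFreeByCyclic_comp_ofFreeByCyclic :
    toFreeByCyclic.comp ofFreeByCyclic = MonoidHom.id _ := by
  refine SemidirectProduct.hom_ext (FreeGroup.ext_hom _ _ fun i => ?_) (MonoidHom.ext_mint ?_)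
  · fin_cases i
    · simp
    · show toFreeByCyclic (freeToBraid (of 1)) = inl (of 1)
      rw [freeToBraid_of_one, _root_.map_mul, _root_.map_mul, _root_.map_mul, _root_.map_inv,
        toFreeByCyclic_braidGen_zero, toFreeByCyclic_braidGen_one, ← freeAut_of_zero, inl_freeAut]
      group
  · simp

def equivFreeByCyclic : BraidGroup 3 ≃* FreeByCyclic :=
  MonoidHom.toMulEquiv toFreeByCyclic ofFreeByCyclic
    ofFreeByCyclic_comp_toFreeByCyclic toFreeByCyclic_comp_ofFreeByCyclic

open scoped commutatorElement in
theorem commutator_freeByCyclic : commutator FreeByCyclic = (inl : _ →* FreeByCyclic).range := by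
  refine le_antisymm commutator_le_range_inl ?_
  have inl_mem (x : FreeGroup (Fin 2)) :
      (inl (freeAut x * x⁻¹) : FreeByCyclic) ∈ commutator FreeByCyclic := by
    have h := commutatorElement_inr_inl (φ := zpowersHom _ freeAut) (ofAdd 1) x
    rw [zpowersHom_apply, toAdd_ofAdd, zpow_one] at h
    rw [← h]
    exact Subgroup.commutator_mem_commutator (Subgroup.mem_top _) (Subgroup.mem_top _)
  have mem_zero : (inl (of 0) : FreeByCyclic) ∈ commutator FreeByCyclic := by
    simpa using inv_mem (inl_mem (of 1))
  have mem_one : (inl (of 1) : FreeByCyclic) ∈ commutator FreeByCyclic := by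
    simpa using mul_mem (inl_mem (of 0)) mem_zero
  rw [MonoidHom.range_eq_map, ← FreeGroup.closure_range_of, MonoidHom.map_closure,
    Subgroup.closure_le]
  rintro _ ⟨_, ⟨i, rfl⟩, rfl⟩
  fin_cases i
  exacts [mem_zero, mem_one]

noncomputable def commutatorEquivFreeGroup : commutator (BraidGroup 3) ≃* FreeGroup (Fin 2) :=
  (equivFreeByCyclic.subgroupMap _).trans <|
    (MulEquiv.subgroupCongr <|
      (Subgroup.map_commutator_of_surjective equivFreeByCyclic.surjective).trans
        commutator_freeByCyclic).trans
    (MonoidHom.ofInjective inl_injective).symm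

end BraidGroup

theorem card_hom_K3_eq_card_sq_general (S : Type) [Group S] :
    Nat.card (↥(commutator (BraidGroup 3)) →* S) = (Nat.card S) ^ 2 := by
  rw [Nat.card_congr (MulEquiv.monoidHomCongrLeftEquiv BraidGroup.commutatorEquivFreeGroup),
    FreeGroup.card_monoidHom, Nat.card_fin]

/-- For a finite group `S`, the number of homomorphisms from the commutator subgroup
of the braid group on 3 strands into `S` equals the square of the cardinality of `S`. -/
theorem card_hom_K3_eq_card_sq (S : Type) [Group S] [Finite S] :
    Nat.card (↥(commutator (BraidGroup 3)) →* S) = (Nat.card S) ^ 2 :=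
  card_hom_K3_eq_card_sq_general S
end

section
/- For every n ≥ 6, every group Σ, every group homomorphism f : K_n →* Σ, and every natural number k, the range of f is contained in the k-th term derivedSeries Σ k of the derived series of Σ. (In particular, Hom(K_n, Σ) = Hom(K_n, Σ^{(r)}) where Σ^{(r)} is the stable term of the derived series.) -/
open Subgroup Group

section
variable {G : Type*} [Group G]

lemma Group.IsPerfect.range_le_derivedSeries [IsPerfect G] {S : Type*} [Group S]
    (f : G →* S) (k : ℕ) : f.range ≤ derivedSeries S k := by
  simpa [MonoidHom.range_eq_map] using map_derivedSeries_le_derivedSeries f k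

lemma isPerfect_commutator_of_le (h : commutator G ≤ derivedSeries G 2) :
    IsPerfect (commutator G) :=
  isPerfect_iff.mpr ((commutator_le_self _).antisymm h)

lemma commutator_le_ker_of_commute {ι : Type*} {s : ι → G} (hs : closure (Set.range s) = ⊤)
    {Q : Type*} [Group Q] (φ : G →* Q) (h : ∀ i j, Commute (φ (s i)) (φ (s j))) :
    commutator G ≤ φ.ker := by
  have : IsMulCommutative φ.range := by
    rw [MonoidHom.range_eq_map, ← hs, MonoidHom.map_closure, ← Set.range_comp]
    refine isMulCommutative_closure ?_
    rintro _ ⟨i, rfl⟩ _ ⟨j, rfl⟩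
    exact h i j
  rw [commutator_def, commutator_le]
  intro g _ g' _
  rw [MonoidHom.mem_ker, map_commutatorElement, commutatorElement_eq_one_iff_mul_comm]
  exact setLike_mul_comm (MonoidHom.mem_range.mpr ⟨g, rfl⟩) (MonoidHom.mem_range.mpr ⟨g', rfl⟩)

lemma Abelianization.of_eq_of_braid {a b : G} (hab : a * b * a = b * a * b) :
    of a = of b := by
  have := congrArg of hab
  simp only [map_mul] at this
  rw [mul_right_comm, mul_comm (of b)] at this
  exact mul_left_cancel (mul_right_cancel this)

lemma Abelianization.inv_mul_mem_commutator_of_of_eq {a b : G} (h : of a = of b) :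
    b⁻¹ * a ∈ commutator G :=
  ker_of (G := G) ▸ (MonoidHom.eq_iff _).mp h

lemma commute_of_mem_commutator (hG : derivedSeries G 2 = ⊥) {x y : G}
    (hx : x ∈ commutator G) (hy : y ∈ commutator G) : Commute x y := by
  rw [← commutatorElement_eq_one_iff_commute, ← mem_bot, ← hG, derivedSeries_succ]
  exact commutator_mem_commutator hx hy

lemma derivedSeries_quotient_derivedSeries_eq_bot (k : ℕ) :
    derivedSeries (G ⧸ derivedSeries G k) k = ⊥ := by
  rw [← map_derivedSeries_eq (QuotientGroup.mk'_surjective _), ← le_bot_iff, map_le_iff_le_comap,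
    MonoidHom.comap_bot, QuotientGroup.ker_mk']

lemma eq_of_braid_of_commute (hG : derivedSeries G 2 = ⊥) {a b c : G}
    (hab : a * b * a = b * a * b) (hac : Commute a c) (hbc : Commute b c)
    (hca : Abelianization.of a = Abelianization.of c) : a = b := by
  set t := b⁻¹ * a
  have htc : Commute t c := hbc.inv_left.mul_left hac
  have htb : Commute t b := by
    have htu := commute_of_mem_commutator hG
      (Abelianization.inv_mul_mem_commutator_of_of_eq (Abelianization.of_eq_of_braid hab))
      (Abelianization.inv_mul_mem_commutator_of_of_eq hca)
    have hta : Commute t a := by simpa using htc.mul_right htu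
    simpa [t] using hta.mul_right (Commute.refl t).inv_right
  have ha : a = b * t := by simp [t]
  rw [ha] at hab
  have ht : t = 1 := by simpa [mul_assoc, htb.symm.left_comm, htb.symm.eq] using hab.symm
  rw [ha, ht, mul_one]
end

variable {n : ℕ}

lemma braidGen_commute {i j : Fin (n - 1)} (h : 2 ≤ |(i : ℤ) - j|) :
    Commute (braidGen i) (braidGen j) := by
  have : PresentedGroup.mk (braidRels n) (.of i * .of j) = .mk _ (.of j * .of i) :=
    PresentedGroup.mk_eq_mk_of_mul_inv_mem (Or.inl ⟨i, j, h, by group⟩)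
  simp only [map_mul] at this
  exact this

lemma braidGen_braid {i j : Fin (n - 1)} (h : |(i : ℤ) - j| = 1) :
    braidGen i * braidGen j * braidGen i = braidGen j * braidGen i * braidGen j := by
  have : PresentedGroup.mk (braidRels n) (.of i * .of j * .of i) = .mk _ (.of j * .of i * .of j) :=
    PresentedGroup.mk_eq_mk_of_mul_inv_mem (Or.inr ⟨i, j, h, by group⟩)
  simp only [map_mul] at this
  exact this

lemma abelianization_of_braidGen_eq (i j : Fin (n - 1)) :
    Abelianization.of (braidGen i) = Abelianization.of (braidGen j) := by
  suffices h : ∀ (k : ℕ) (hk : k < n - 1), Abelianization.of (braidGen ⟨k, hk⟩) =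
      Abelianization.of (braidGen ⟨0, by omega⟩ : BraidGroup n) from
    (h i i.2).trans (h j j.2).symm
  intro k hk
  induction k with
  | zero => rfl
  | succ k ih =>
    rw [← ih (by omega)]
    exact (Abelianization.of_eq_of_braid (braidGen_braid (by simp))).symm

lemma exists_far_of_succ_eq (hn : 6 ≤ n) {i j : Fin (n - 1)} (hij : (i : ℕ) + 1 = j) :
    ∃ c : Fin (n - 1), 2 ≤ |(i : ℤ) - c| ∧ 2 ≤ |(j : ℤ) - c| := by
  by_cases hj : (j : ℕ) + 2 < n - 1
  · exact ⟨⟨j + 2, hj⟩, by simp [le_abs]; omega⟩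
  · exact ⟨⟨i - 2, by omega⟩, by simp [le_abs]; omega⟩

lemma map_braidGen_eq_of_succ_eq (hn : 6 ≤ n) {Q : Type*} [Group Q] (hQ : derivedSeries Q 2 = ⊥)
    (φ : BraidGroup n →* Q) {i j : Fin (n - 1)} (hij : (i : ℕ) + 1 = j) :
    φ (braidGen i) = φ (braidGen j) := by
  obtain ⟨c, hic, hjc⟩ := exists_far_of_succ_eq hn hij
  refine eq_of_braid_of_commute hQ (c := φ (braidGen c)) ?_ ((braidGen_commute hic).map φ)
    ((braidGen_commute hjc).map φ) ?_
  · rw [← map_mul, ← map_mul, ← map_mul, ← map_mul,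
      braidGen_braid (by rw [abs_eq zero_le_one]; omega)]
  · simp only [← Abelianization.map_of, abelianization_of_braidGen_eq i c]

lemma commutator_braidGroup_le (hn : 6 ≤ n) :
    commutator (BraidGroup n) ≤ derivedSeries (BraidGroup n) 2 := by
  let φ := QuotientGroup.mk' (derivedSeries (BraidGroup n) 2)
  have hφ {i j : Fin (n - 1)} (hij : (i : ℕ) + 1 = j) : φ (braidGen i) = φ (braidGen j) :=
    map_braidGen_eq_of_succ_eq hn (derivedSeries_quotient_derivedSeries_eq_bot 2) φ hij
  rw [← QuotientGroup.ker_mk' (derivedSeries (BraidGroup n) 2)]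
  refine commutator_le_ker_of_commute (PresentedGroup.closure_range_of _) φ fun i j ↦ ?_
  by_cases hfar : 2 ≤ |(i : ℤ) - j|
  · exact (braidGen_commute hfar).map φ
  · rw [le_abs, not_or] at hfar
    obtain hij | hij | hji : i = j ∨ (i : ℕ) + 1 = j ∨ (j : ℕ) + 1 = i := by omega
    · rw [hij]
    · exact hφ hij ▸ Commute.refl _
    · exact hφ hji ▸ Commute.refl _

/-- For `n ≥ 6`, every homomorphism from the commutator subgroup of the braid group
into a group `S` has range contained in every term of the derived series of `S`. -/
theorem range_le_derivedSeries (n : ℕ) (hn : 6 ≤ n) (S : Type) [Group S]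
    (f : ↥(commutator (BraidGroup n)) →* S) (k : ℕ) :
    f.range ≤ derivedSeries S k :=
  have := isPerfect_commutator_of_le (commutator_braidGroup_le hn)
  IsPerfect.range_le_derivedSeries f k
end

section
/- For every n ≥ 6 and every solvable group Σ, every group homomorphism f : K_n →* Σ is trivial (f sends every element to 1). -/
/-!
Let `Q = B_n / B_n''`, a metabelian group. All `σ_i` are conjugate, so `σ_i σ_l⁻¹` lies in the
abelian group `Q'`, and conjugation by `σ_i` and by `σ_l` agree on `Q'`. Taking `σ_l` commuting with
`σ_i` and `σ_{i+1}` (this is where `n ≥ 6` enters), `σ_i` commutes with `σ_{i+1} σ_i⁻¹ ∈ Q'`, hence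
with `σ_{i+1}`, and the braid relation then forces `σ_i = σ_{i+1}` in `Q`. So `Q` is cyclic,
`B_n' = B_n''`, i.e. `K_n` is perfect, and a perfect group maps trivially to every solvable group.
-/

open Subgroup
open scoped commutatorElement

theorem Fin.rel_of_forall_rel_succ {m : ℕ} {r : Fin m → Fin m → Prop} (hr : Equivalence r)
    (h : ∀ i j : Fin m, (j : ℕ) = i + 1 → r i j) (i j : Fin m) : r i j := by
  suffices key : ∀ (j : ℕ) (hj : j < m) (i : Fin m), (i : ℕ) ≤ j → r i ⟨j, hj⟩ by
    rcases le_total i j with hij | hji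
    · exact key j j.2 i hij
    · exact hr.symm (key i i.2 j hji)
  intro j
  induction j with
  | zero =>
    intro hj i hi
    obtain rfl : i = ⟨0, hj⟩ := Fin.ext (Nat.le_zero.1 hi)
    exact hr.refl _
  | succ j ih =>
    intro hj i hi
    rcases hi.eq_or_lt with heq | hlt
    · obtain rfl : i = ⟨j + 1, hj⟩ := Fin.ext heq
      exact hr.refl _
    · exact hr.trans (ih (by omega) i (by omega)) (h ⟨j, by omega⟩ ⟨j + 1, hj⟩ rfl)

theorem commutator_le_ker_of_map_eq {G H : Type*} [Group G] [Group H] {S : Set G}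
    (hS : closure S = ⊤) (φ : G →* H) (hφ : ∀ x ∈ S, ∀ y ∈ S, φ x = φ y) :
    commutator G ≤ φ.ker := by
  have : IsMulCommutative φ.range := by
    rw [MonoidHom.range_eq_map, ← hS, MonoidHom.map_closure]
    refine isMulCommutative_closure ?_
    rintro _ ⟨x, hx, rfl⟩ _ ⟨y, hy, rfl⟩
    rw [hφ x hx y hy]
  rw [commutator_def, commutator_le]
  intro a _ b _
  rw [MonoidHom.mem_ker, map_commutatorElement, commutatorElement_eq_one_iff_mul_comm]
  exact setLike_mul_comm (s := φ.range) (φ.mem_range.2 ⟨a, rfl⟩) (φ.mem_range.2 ⟨b, rfl⟩)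

theorem derivedSeries_quotient_derivedSeries (G : Type*) [Group G] (k : ℕ) :
    derivedSeries (G ⧸ derivedSeries G k) k = ⊥ := by
  rw [← map_derivedSeries_eq (QuotientGroup.mk'_surjective _), Subgroup.map_eq_bot_iff,
    QuotientGroup.ker_mk']

theorem Group.IsPerfect.map_eq_one_of_isSolvable {G S : Type*} [Group G] [Group S]
    [IsPerfect G] [IsSolvable S] (f : G →* S) (x : G) : f x = 1 := by
  obtain ⟨m, hm⟩ := IsSolvable.solvable (G := S)
  have hx : f x ∈ derivedSeries S m := map_derivedSeries_le_derivedSeries f m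
    (mem_map_of_mem f (by rw [IsPerfect.derivedSeries_eq_top]; exact mem_top x))
  rwa [hm, mem_bot] at hx

section BraidRelation

variable {G : Type*} [Group G] {x y z : G}

theorem isConj_of_braid (h : x * y * x = y * x * y) : IsConj x y :=
  isConj_iff.2 ⟨x * y, by rw [h]; group⟩

theorem Commute.eq_of_braid (hc : Commute x y) (h : x * y * x = y * x * y) : x = y := by
  rw [hc.eq] at h
  exact mul_left_cancel h

theorem mul_inv_mem_commutator_of_isConj (h : IsConj x y) : y * x⁻¹ ∈ commutator G := by
  obtain ⟨c, rfl⟩ := isConj_iff.1 h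
  rw [commutator_def, show c * x * c⁻¹ * x⁻¹ = ⁅c, x⁆ from rfl]
  exact commutator_mem_commutator (mem_top c) (mem_top x)

variable (hG : derivedSeries G 2 = ⊥)
include hG

theorem commute_of_isConj_of_mem_commutator {a : G} (hconj : IsConj z x)
    (ha : a ∈ commutator G) (hza : Commute z a) : Commute x a := by
  have hcomm : commutator G ≤ centralizer (commutator G) := by
    rw [← commutator_eq_bot_iff_le_centralizer, ← derivedSeries_one, ← derivedSeries_succ, hG]
  have hca : Commute (x * z⁻¹) a :=
    mem_centralizer_iff.1 (hcomm ha) _ (mul_inv_mem_commutator_of_isConj hconj)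
  simpa using hca.mul_left hza

theorem eq_of_braid_of_isConj_of_commute (h : x * y * x = y * x * y) (hconj : IsConj z x)
    (hzx : Commute z x) (hzy : Commute z y) : x = y := by
  have ha : y * x⁻¹ ∈ commutator G := mul_inv_mem_commutator_of_isConj (isConj_of_braid h)
  have hxa : Commute x (y * x⁻¹) :=
    commute_of_isConj_of_mem_commutator hG hconj ha (hzy.mul_right hzx.inv_right)
  exact Commute.eq_of_braid (by simpa using hxa.mul_right (Commute.refl x)) h

end BraidRelation

namespace BraidGroup

variable {n : ℕ}

theorem braidGen_commute {i j : Fin (n - 1)} (h : 2 ≤ |(i : ℤ) - j|) :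
    Commute (braidGen i) (braidGen j) := by
  have := PresentedGroup.mk_eq_mk_of_mul_inv_mem (rels := braidRels n)
    (x := .of i * .of j) (y := .of j * .of i) (Or.inl ⟨i, j, h, by group⟩)
  simpa [Commute, SemiconjBy, braidGen, PresentedGroup.of] using this

theorem braidGen_braid {i j : Fin (n - 1)} (h : |(i : ℤ) - j| = 1) :
    braidGen i * braidGen j * braidGen i = braidGen j * braidGen i * braidGen j := by
  have := PresentedGroup.mk_eq_mk_of_mul_inv_mem (rels := braidRels n)
    (x := .of i * .of j * .of i) (y := .of j * .of i * .of j) (Or.inr ⟨i, j, h, by group⟩)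
  simpa [braidGen, PresentedGroup.of] using this

theorem isConj_braidGen (i j : Fin (n - 1)) : IsConj (braidGen i) (braidGen j) :=
  Fin.rel_of_forall_rel_succ (r := fun i j ↦ IsConj (braidGen i) (braidGen j))
    ⟨fun _ ↦ IsConj.refl _, IsConj.symm, IsConj.trans⟩
    (fun i j hij ↦ isConj_of_braid (braidGen_braid (by rw [hij]; simp))) i j

theorem map_braidGen_eq {Q : Type*} [Group Q] (hQ : derivedSeries Q 2 = ⊥) (hn : 6 ≤ n)
    (φ : BraidGroup n →* Q) (i j : Fin (n - 1)) : φ (braidGen i) = φ (braidGen j) := by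
  refine Fin.rel_of_forall_rel_succ (r := fun i j ↦ φ (braidGen i) = φ (braidGen j))
    ⟨fun _ ↦ rfl, Eq.symm, Eq.trans⟩ (fun i j hij ↦ ?_) i j
  -- With at least five generators, some `σ_l` is at distance `≥ 2` from both `σ_i` and `σ_{i+1}`.
  obtain ⟨l, hli, hlj⟩ : ∃ l : Fin (n - 1), 2 ≤ |(i : ℤ) - l| ∧ 2 ≤ |(j : ℤ) - l| := by
    by_cases hi : 2 ≤ (i : ℕ)
    · refine ⟨⟨0, by omega⟩, ?_, ?_⟩ <;>
        simp only [CharP.cast_eq_zero, sub_zero, Nat.abs_cast, Nat.ofNat_le_cast] <;> omega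
    · exact ⟨⟨i + 3, by omega⟩, by simp, by simp [hij]⟩
  have hbraid : φ (braidGen i) * φ (braidGen j) * φ (braidGen i) =
      φ (braidGen j) * φ (braidGen i) * φ (braidGen j) := by
    simpa only [map_mul] using congrArg φ (braidGen_braid (by rw [hij]; simp))
  exact eq_of_braid_of_isConj_of_commute hQ hbraid (φ.map_isConj (isConj_braidGen l i))
    ((braidGen_commute hli).symm.map φ) ((braidGen_commute hlj).symm.map φ)

theorem commutator_le_derivedSeries_two (hn : 6 ≤ n) :
    commutator (BraidGroup n) ≤ derivedSeries (BraidGroup n) 2 := by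
  have := commutator_le_ker_of_map_eq (PresentedGroup.closure_range_of _)
    (QuotientGroup.mk' (derivedSeries (BraidGroup n) 2)) (by
      rintro _ ⟨i, rfl⟩ _ ⟨j, rfl⟩
      exact map_braidGen_eq (derivedSeries_quotient_derivedSeries _ 2) hn _ i j)
  rwa [QuotientGroup.ker_mk'] at this

theorem isPerfect_commutator (hn : 6 ≤ n) : Group.IsPerfect (commutator (BraidGroup n)) := by
  rw [isPerfect_iff]
  exact le_antisymm (commutator_le_left _ _) (commutator_le_derivedSeries_two hn)

end BraidGroup

/-- For `n ≥ 6` and a solvable group `S`, every homomorphism from the commutator subgroup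
of the braid group into `S` is trivial. -/
theorem hom_Kn_solvable_trivial (n : ℕ) (hn : 6 ≤ n) (S : Type) [Group S] [Group.IsSolvable S]
    (f : ↥(commutator (BraidGroup n)) →* S) :
    ∀ x, f x = 1 := by
  have := BraidGroup.isPerfect_commutator hn
  exact Group.IsPerfect.map_eq_one_of_isSolvable f
end

section
/- The group K_3 has exactly three subgroups of index 2: Nat.card {H : Subgroup K_3 // H.index = 2} = 3. -/
/-!
Write `x = σ₂σ₁⁻¹` and `y = σ₁xσ₁⁻¹`. The braid relation gives `σ₁yσ₁⁻¹ = x⁻¹y`, so conjugation by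
`σ₁` preserves `N = ⟨x, y⟩`; as `σ₁` and `x` generate `B₃`, every braid is `σ₁ᵏn` with `n ∈ N`,
and `N` is the kernel of the exponent sum `B₃ → ℤ`, i.e. `K₃ = N`.

Index-two subgroups of a group are exactly the kernels of its nontrivial homomorphisms to `ℤ/2`,
and for a group generated by `x, y` such a homomorphism is determined by its values on `x, y`.
All four pairs of values occur for `K₃`: the map `B₃ → (ℤ/2)² ⋊ ℤ` sending `σ₁ ↦ t` and
`σ₂ ↦ e₁t`, where `t` generates `ℤ` and rotates the three nonzero vectors, sends `x ↦ e₁` and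
`y ↦ e₂`.
Hence `K₃` has `4 - 1 = 3` subgroups of index two.
-/

open Subgroup
open scoped commutatorElement

local notation "C₂" => Multiplicative (ZMod 2)

section IndexTwo

variable {G C : Type*} [Group G] [Group C]

theorem MonoidHom.eq_of_ker_eq_of_card_eq_two (hC : Nat.card C = 2) {f g : G →* C}
    (h : f.ker = g.ker) : f = g := by
  ext x
  by_cases hfx : f x = 1
  · rw [hfx, eq_comm, ← MonoidHom.mem_ker, ← h, MonoidHom.mem_ker, hfx]
  · have hgx : g x ≠ 1 := by rwa [Ne, ← MonoidHom.mem_ker, ← h, MonoidHom.mem_ker]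
    exact ((Nat.card_eq_two_iff' 1).1 hC).unique hfx hgx

theorem MonoidHom.index_ker_eq_two (hC : Nat.card C = 2) {f : G →* C} (hf : f ≠ 1) :
    f.ker.index = 2 := by
  have : Fact (Nat.card C).Prime := ⟨hC ▸ Nat.prime_two⟩
  have hrange : f.range = ⊤ :=
    f.range.eq_bot_or_eq_top_of_prime_card.resolve_left (MonoidHom.range_eq_bot_iff.not.2 hf)
  rw [Subgroup.index_ker, hrange, Subgroup.card_top, hC]

theorem Subgroup.exists_ker_eq_of_index_eq_two (hC : Nat.card C = 2) {H : Subgroup G}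
    (hH : H.index = 2) : ∃ f : G →* C, f.ker = H := by
  have : H.Normal := normal_of_index_eq_two hH
  have : Fact (Nat.Prime 2) := ⟨Nat.prime_two⟩
  let e : G ⧸ H ≃* C := mulEquivOfPrimeCardEq (H.index_eq_card ▸ hH) hC
  exact ⟨(e : G ⧸ H →* C).comp (QuotientGroup.mk' H), by
    rw [MonoidHom.ker_mulEquiv_comp, QuotientGroup.ker_mk']⟩

theorem Subgroup.card_index_eq_two_eq_card_monoidHom_ne_one (hC : Nat.card C = 2) :
    Nat.card {H : Subgroup G // H.index = 2} = Nat.card {f : G →* C // f ≠ 1} := by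
  refine (Nat.card_eq_of_bijective
    (fun f => ⟨f.1.ker, MonoidHom.index_ker_eq_two hC f.2⟩) ⟨?_, ?_⟩).symm
  · intro f g h
    exact Subtype.ext (MonoidHom.eq_of_ker_eq_of_card_eq_two hC (congrArg Subtype.val h))
  · rintro ⟨H, hH⟩
    obtain ⟨f, rfl⟩ := Subgroup.exists_ker_eq_of_index_eq_two hC hH
    refine ⟨⟨f, ?_⟩, rfl⟩
    rintro rfl
    simp at hH

end IndexTwo

section TwoGenerated

variable {G : Type*} [Group G] {x y : G}

theorem MonoidHom.bijective_eval_pair_of_map_eq_basis (hG : closure {x, y} = ⊤)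
    (φ : G →* C₂ × C₂) (hx : φ x = (.ofAdd 1, 1)) (hy : φ y = (1, .ofAdd 1)) :
    Function.Bijective fun f : G →* C₂ => (f x, f y) := by
  refine ⟨fun f g hfg => MonoidHom.eq_of_eqOn_dense hG ?_, fun ⟨p, q⟩ => ?_⟩
  · rintro _ (rfl | rfl)
    exacts [congrArg Prod.fst hfg, congrArg Prod.snd hfg]
  · have hpow : ∀ r : C₂, Multiplicative.ofAdd 1 ^ r.toAdd.val = r := by decide
    refine ⟨((powMonoidHom p.toAdd.val).coprod (powMonoidHom q.toAdd.val)).comp φ, ?_⟩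
    simp [hx, hy, hpow]

theorem Subgroup.card_index_eq_two_of_map_eq_basis (hG : closure {x, y} = ⊤)
    (φ : G →* C₂ × C₂) (hx : φ x = (.ofAdd 1, 1)) (hy : φ y = (1, .ofAdd 1)) :
    Nat.card {H : Subgroup G // H.index = 2} = 3 := by
  have hbij := MonoidHom.bijective_eval_pair_of_map_eq_basis hG φ hx hy
  calc Nat.card {H : Subgroup G // H.index = 2}
      = Nat.card {f : G →* C₂ // f ≠ 1} :=
        Subgroup.card_index_eq_two_eq_card_monoidHom_ne_one (by simp)
    _ = Nat.card {v : C₂ × C₂ // v ≠ 1} :=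
        Nat.card_congr <| (Equiv.ofBijective _ hbij).subtypeEquiv fun f =>
          (hbij.1.ne_iff' rfl).symm
    _ = 3 := by rw [Nat.card_eq_fintype_card]; rfl

end TwoGenerated

theorem MonoidHom.ker_eq_of_sup_zpowers_eq_top {G : Type*} [Group G] {N : Subgroup G} {a : G}
    {e : G →* Multiplicative ℤ} (ha : a ∈ normalizer (N : Set G)) (hsup : zpowers a ⊔ N = ⊤)
    (he : e a = .ofAdd 1) (hN : N ≤ e.ker) : e.ker = N := by
  have : N.Normal := normalizer_eq_top_iff.1 <| top_le_iff.1 <|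
    hsup ▸ sup_le ((zpowers_le).2 ha) le_normalizer
  refine le_antisymm (fun g hg => ?_) hN
  obtain ⟨_, ⟨k, rfl⟩, n, hn, rfl⟩ := mem_sup_of_normal_right.1 (hsup ▸ mem_top g)
  have hk : k = 0 := by simpa [he, (MonoidHom.mem_ker).1 (hN hn)] using hg
  simpa [hk] using hn

def SemidirectProduct.leftHomOfLeKer {G N H : Type*} [Group G] [Group N] [Group H]
    {φ : H →* MulAut N} (f : G →* N ⋊[φ] H) {K : Subgroup G}
    (hK : K ≤ (SemidirectProduct.rightHom.comp f).ker) : K →* N where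
  toFun k := (f k).left
  map_one' := by simp
  map_mul' k l := by simp [show (f k).right = 1 from hK k.2]

namespace BraidGroup

theorem braidGen_mul_braidGen_mul_braidGen {n : ℕ} {i j : Fin (n - 1)}
    (h : |(i : ℤ) - (j : ℤ)| = 1) :
    braidGen i * braidGen j * braidGen i = braidGen j * braidGen i * braidGen j :=
  PresentedGroup.mk_eq_mk_of_mul_inv_mem (Or.inr ⟨i, j, h, by group⟩)

theorem closure_range_braidGen (n : ℕ) : closure (Set.range (braidGen (n := n))) = ⊤ :=
  PresentedGroup.closure_range_of _

def σ₁ : BraidGroup 3 := braidGen 0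
def σ₂ : BraidGroup 3 := braidGen 1

theorem σ₁_mul_σ₂_mul_σ₁ : σ₁ * σ₂ * σ₁ = σ₂ * σ₁ * σ₂ :=
  braidGen_mul_braidGen_mul_braidGen (by decide)

theorem closure_σ₁_σ₂ : closure {σ₁, σ₂} = ⊤ := by
  refine top_le_iff.1 (closure_range_braidGen 3 ▸ closure_mono ?_)
  rintro _ ⟨i, rfl⟩
  fin_cases i
  exacts [Or.inl rfl, Or.inr rfl]

def lift3 {G : Type*} [Group G] (u v : G) (h : u * v * u = v * u * v) : BraidGroup 3 →* G :=
  PresentedGroup.toGroup (f := ![u, v]) <| by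
    rintro r (⟨i, j, hij, rfl⟩ | ⟨i, j, hij, rfl⟩) <;> fin_cases i <;> fin_cases j <;>
      simp at hij ⊢
    · rw [h]; group
    · rw [← h]; group

@[simp]
theorem lift3_σ₁ {G : Type*} [Group G] (u v : G) (h : u * v * u = v * u * v) :
    lift3 u v h σ₁ = u :=
  PresentedGroup.toGroup.of _

@[simp]
theorem lift3_σ₂ {G : Type*} [Group G] (u v : G) (h : u * v * u = v * u * v) :
    lift3 u v h σ₂ = v :=
  PresentedGroup.toGroup.of _

noncomputable def exponentSum : BraidGroup 3 →* Multiplicative ℤ :=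
  lift3 (.ofAdd 1) (.ofAdd 1) rfl

def x : BraidGroup 3 := σ₂ * σ₁⁻¹
def y : BraidGroup 3 := σ₁ * x * σ₁⁻¹

theorem closure_σ₁_x : closure {σ₁, x} = ⊤ := by
  refine top_le_iff.1 (closure_σ₁_σ₂ ▸ closure_le _ |>.2 ?_)
  rintro _ (rfl | rfl)
  · exact subset_closure (Or.inl rfl)
  · rw [show σ₂ = x * σ₁ by simp [x]]
    exact mul_mem (subset_closure (Or.inr rfl)) (subset_closure (Or.inl rfl))

theorem σ₁_mul_y_mul_σ₁_inv : σ₁ * y * σ₁⁻¹ = x⁻¹ * y := by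
  calc σ₁ * y * σ₁⁻¹ = σ₁ * σ₂⁻¹ * (σ₂ * σ₁ * σ₂) * σ₁⁻¹ ^ 3 := by simp only [x, y]; group
    _ = x⁻¹ * y := by rw [← σ₁_mul_σ₂_mul_σ₁]; simp only [x, y]; group

theorem σ₁_mem_normalizer : σ₁ ∈ normalizer (closure {x, y} : Set (BraidGroup 3)) := by
  rw [mem_normalizer_iff_map_conj_eq, MonoidHom.map_closure, Set.image_pair, MonoidHom.coe_coe,
    MulAut.conj_apply, MulAut.conj_apply, σ₁_mul_y_mul_σ₁_inv]
  have hx : x ∈ closure {y, x⁻¹ * y} := by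
    have h : y * (x⁻¹ * y)⁻¹ ∈ closure {y, x⁻¹ * y} :=
      mul_mem (subset_closure (Or.inl rfl)) (inv_mem (subset_closure (Or.inr rfl)))
    simpa using h
  have hy : y ∈ closure {x, y} := subset_closure (Or.inr rfl)
  refine le_antisymm (closure_le _ |>.2 ?_) (closure_le _ |>.2 ?_)
  · rintro _ (rfl | rfl)
    exacts [hy, mul_mem (inv_mem (subset_closure (Or.inl rfl))) hy]
  · rintro _ (rfl | rfl)
    exacts [hx, subset_closure (Or.inl rfl)]

theorem zpowers_σ₁_sup_closure : zpowers σ₁ ⊔ closure {x, y} = ⊤ := by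
  refine top_le_iff.1 (closure_σ₁_x ▸ closure_le _ |>.2 ?_)
  rintro _ (rfl | rfl)
  exacts [mem_sup_left (mem_zpowers σ₁), mem_sup_right (subset_closure (Or.inl rfl))]

theorem x_eq_commutatorElement : x = ⁅σ₁ * σ₂, σ₁⁆ := by
  rw [commutatorElement_def, σ₁_mul_σ₂_mul_σ₁, x]
  group

theorem closure_le_commutator : closure {x, y} ≤ commutator (BraidGroup 3) := by
  have hx : x ∈ commutator (BraidGroup 3) :=
    x_eq_commutatorElement ▸ commutator_mem_commutator (mem_top _) (mem_top _)
  refine closure_le _ |>.2 ?_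
  rintro _ (rfl | rfl)
  exacts [hx, (commutator_normal ⊤ ⊤).conj_mem x hx σ₁]

theorem commutator_eq_closure : commutator (BraidGroup 3) = closure {x, y} := by
  have hab : commutator (BraidGroup 3) ≤ exponentSum.ker :=
    Abelianization.commutator_subset_ker exponentSum
  have hker : exponentSum.ker = closure {x, y} :=
    MonoidHom.ker_eq_of_sup_zpowers_eq_top σ₁_mem_normalizer zpowers_σ₁_sup_closure
      (lift3_σ₁ _ _ _) (closure_le_commutator.trans hab)
  exact le_antisymm (hker ▸ hab) closure_le_commutator

def xK : commutator (BraidGroup 3) := ⟨x, closure_le_commutator (subset_closure (Or.inl rfl))⟩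
def yK : commutator (BraidGroup 3) := ⟨y, closure_le_commutator (subset_closure (Or.inr rfl))⟩

theorem closure_xK_yK : closure {xK, yK} = ⊤ := by
  apply map_injective (commutator (BraidGroup 3)).subtype_injective
  rw [MonoidHom.map_closure, ← MonoidHom.range_eq_map, range_subtype, Set.image_pair]
  exact commutator_eq_closure.symm

def kleinRotate : C₂ × C₂ ≃* C₂ × C₂ where
  toFun p := (p.2, p.1 * p.2)
  invFun p := (p.1 * p.2, p.1)
  left_inv := by decide
  right_inv := by decide
  map_mul' := by decide

abbrev KleinExt := (C₂ × C₂) ⋊[zpowersHom _ kleinRotate] Multiplicative ℤ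

open SemidirectProduct in
noncomputable def toKleinExt : BraidGroup 3 →* KleinExt :=
  lift3 (inr (.ofAdd 1)) (inl (.ofAdd 1, 1) * inr (.ofAdd 1)) <|
    SemidirectProduct.ext (by decide) (by decide)

noncomputable def commutatorToKlein : commutator (BraidGroup 3) →* C₂ × C₂ :=
  SemidirectProduct.leftHomOfLeKer toKleinExt (Abelianization.commutator_subset_ker _)

theorem commutatorToKlein_xK : commutatorToKlein xK = (.ofAdd 1, 1) :=
  rfl

theorem commutatorToKlein_yK : commutatorToKlein yK = (1, .ofAdd 1) :=
  rfl

end BraidGroup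

/-- The commutator subgroup of the braid group on 3 strands has exactly three subgroups
of index 2. -/
theorem K3_subgroups_index_two :
    Nat.card {H : Subgroup ↥(commutator (BraidGroup 3)) // H.index = 2} = 3 :=
  Subgroup.card_index_eq_two_of_map_eq_basis BraidGroup.closure_xK_yK
    BraidGroup.commutatorToKlein BraidGroup.commutatorToKlein_xK BraidGroup.commutatorToKlein_yK
end
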